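/- Let T be a tree, i.e., a simple graph (on a possibly infinite vertex set) that is connected and acyclic, and let a group Γ act on T by graph automorphisms so that no element of Γ inverts an edge of T. Let n ≥ 1 and let a₁, …, aₙ ∈ Γ and integers α₁, …, αₙ ≥ 2 and β_{i,j} ≥ 2 (for 1 ≤ i < j ≤ n) be such that aᵢ^{αᵢ} = 1 for all i and (aᵢ aⱼ)^{β_{i,j}} = 1 for all 1 ≤ i < j ≤ n. Then there exists a vertex p of T that is fixed by every element of the subgroup of Γ generated by a₁, …, aₙ. (In particular, every action without edge inversions of the presented group Gₙ = ⟨a₁,…,aₙ | a₁^{α₁} = ⋯ = aₙ^{αₙ} = (aᵢaⱼ)^{β_{i,j}} = 1, 1 ≤ i < j ≤ n⟩ on a tree has a fixed vertex.) -/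

import Mathlib

/-!
A finite-order automorphism of a tree cannot translate along a path. Hence a vertex of minimal
displacement under `aᵢ` is fixed unless `aᵢ` inverts an edge, and the same argument, applied to
`aᵢ * aⱼ` along a shortest path between `Fix aᵢ` and `Fix aⱼ`, shows that these fixed subtrees
meet. Subtrees of a tree have the Helly property, so all the `Fix aᵢ` share a vertex, which is then
fixed by the whole subgroup.
-/

open MulAction

namespace SimpleGraph

variable {V : Type*} {G : SimpleGraph V} {u v w : V}

namespace Walk

lemma snd_append_of_not_nil {p : G.Walk u v} (q : G.Walk v w) (hp : ¬p.Nil) :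
    (p.append q).snd = p.snd := by
  have := not_nil_iff_lt_length.mp hp
  rcases Nat.lt_or_ge 1 p.length with h | h
  · simp [snd, getVert_append, h]
  · simp [snd, getVert_append, show p.length = 1 by omega, ← getVert_length p]

lemma penultimate_append_of_not_nil (p : G.Walk u v) {q : G.Walk v w} (hq : ¬q.Nil) :
    (p.append q).penultimate = q.penultimate := by
  have := not_nil_iff_lt_length.mp hq
  simp only [penultimate, getVert_append, length_append]
  rw [if_neg (by omega)]
  congr 1
  omega

@[simp] lemma snd_copy {u' v' : V} (p : G.Walk u v) (hu : u = u') (hv : v = v') :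
    (p.copy hu hv).snd = p.snd := by
  subst hu hv; rfl

@[simp] lemma penultimate_copy {u' v' : V} (p : G.Walk u v) (hu : u = u') (hv : v = v') :
    (p.copy hu hv).penultimate = p.penultimate := by
  subst hu hv; rfl

lemma dist_snd_penultimate_le (p : G.Walk u v) (hp : 2 ≤ p.length) :
    G.dist p.snd p.penultimate ≤ p.length - 2 := by
  have hpen : p.tail.penultimate = p.penultimate := by
    simp only [penultimate, getVert_tail, length_tail]
    congr 1
    omega
  simpa [hpen, Nat.sub_sub] using dist_le p.tail.dropLast

end Walk

lemma IsAcyclic.isPath_append (hG : G.IsAcyclic) {p : G.Walk u v} {q : G.Walk v w}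
    (hp : p.IsPath) (hq : q.IsPath) (hpq : ¬p.Nil → ¬q.Nil → p.penultimate ≠ q.snd) :
    (p.append q).IsPath := by
  rw [hG.isPath_iff_isChain, Walk.edges_append]
  refine List.IsChain.append ((hG.isPath_iff_isChain p).mp hp)
    ((hG.isPath_iff_isChain q).mp hq) ?_
  intro x hx y hy
  rw [← List.getLast_of_mem_getLast? hx, ← List.head_of_mem_head? hy,
    Walk.getLast_edges_eq_mk_penultimate_end, Walk.head_edges_eq_mk_start_snd, ne_eq,
    Sym2.eq_iff]
  have hpn : ¬p.Nil := fun h ↦ by simp [Walk.edges_eq_nil.mpr h] at hx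
  have hqn : ¬q.Nil := fun h ↦ by simp [Walk.edges_eq_nil.mpr h] at hy
  have := (p.adj_penultimate hpn).ne
  grind

/-- In a tree these are exactly the vertex sets of subtrees. -/
def IsPathConvex (G : SimpleGraph V) (C : Set V) : Prop :=
  ∀ ⦃x y : V⦄, x ∈ C → y ∈ C → ∀ ⦃p : G.Walk x y⦄, p.IsPath → ∀ z ∈ p.support, z ∈ C

lemma IsPathConvex.inter {C D : Set V} (hC : G.IsPathConvex C) (hD : G.IsPathConvex D) :
    G.IsPathConvex (C ∩ D) := fun _ _ hx hy _ hp z hz ↦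
  ⟨hC hx.1 hy.1 hp z hz, hD hx.2 hy.2 hp z hz⟩

/-- The vertex of `C` closest to `c` lies on the path from `c` to any vertex of `C`. -/
lemma IsTree.exists_mem_support_of_isPathConvex (hG : G.IsTree) {C : Set V}
    (hC : G.IsPathConvex C) (hne : C.Nonempty) (c : V) :
    ∃ g ∈ C, ∀ x ∈ C, ∀ p : G.Walk c x, p.IsPath → g ∈ p.support := by
  obtain ⟨g, hgC, hmin⟩ := exists_minimalFor_of_wellFoundedLT (· ∈ C) (G.dist c) hne
  refine ⟨g, hgC, fun x hx p hp ↦ ?_⟩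
  obtain ⟨P, hP, hPlen⟩ := hG.connected.exists_path_of_dist c g
  obtain ⟨Q, hQ, -⟩ := hG.connected.exists_path_of_dist g x
  have hPQ : (P.append Q).IsPath := hG.isAcyclic.isPath_append hP hQ fun hPn _ hPQ ↦ by
    have hcloser : G.dist c P.penultimate < G.dist c g := by
      have := Walk.not_nil_iff_lt_length.mp hPn
      have := dist_le P.dropLast
      grind [Walk.length_dropLast]
    have hsndC : P.penultimate ∈ C := hPQ ▸ hC hgC hx hQ _ (Q.getVert_mem_support 1)
    exact hcloser.not_ge (hmin hsndC hcloser.le)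
  rw [(hG.existsUnique_path c x).unique hp hPQ, Walk.mem_support_append_iff]
  exact Or.inl P.end_mem_support

lemma IsTree.inter_inter_nonempty_of_isPathConvex (hG : G.IsTree) {C₁ C₂ C₃ : Set V}
    (h₁ : G.IsPathConvex C₁) (h₂ : G.IsPathConvex C₂) (h₃ : G.IsPathConvex C₃)
    (h₁₂ : (C₁ ∩ C₂).Nonempty) (h₁₃ : (C₁ ∩ C₃).Nonempty) (h₂₃ : (C₂ ∩ C₃).Nonempty) :
    (C₁ ∩ C₂ ∩ C₃).Nonempty := by
  obtain ⟨c, hc₁, hc₂⟩ := h₁₂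
  obtain ⟨g, hg₃, hgate⟩ :=
    hG.exists_mem_support_of_isPathConvex h₃ (h₁₃.mono Set.inter_subset_right) c
  have hg : ∀ C, G.IsPathConvex C → c ∈ C → (C ∩ C₃).Nonempty → g ∈ C := by
    rintro C hC hcC ⟨x, hxC, hx₃⟩
    obtain ⟨p, hp, -⟩ := hG.connected.exists_path_of_dist c x
    exact hC hcC hxC hp g (hgate x hx₃ p hp)
  exact ⟨g, ⟨hg C₁ h₁ hc₁ h₁₃, hg C₂ h₂ hc₂ h₂₃⟩, hg₃⟩

lemma IsTree.exists_forall_mem_of_isPathConvex (hG : G.IsTree) {ι : Type*} (C : ι → Set V)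
    (hC : ∀ i, G.IsPathConvex (C i)) (s : Finset ι)
    (hs : ∀ i ∈ s, ∀ j ∈ s, (C i ∩ C j).Nonempty) : ∃ x, ∀ i ∈ s, x ∈ C i := by
  classical
  induction s using Finset.induction_on generalizing C with
  | empty => exact ⟨hG.connected.nonempty.some, by simp⟩
  | insert a s _ ih =>
    simp only [Finset.mem_insert, forall_eq_or_imp] at hs ⊢
    obtain ⟨x, hx⟩ := ih (fun i ↦ C i ∩ C a) (fun i ↦ (hC i).inter (hC a)) fun i hi j hj ↦ by
      obtain ⟨y, ⟨hyi, hyj⟩, hya⟩ :=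
        hG.inter_inter_nonempty_of_isPathConvex (hC i) (hC j) (hC a)
          (hs.2 i hi |>.2 j hj) (hs.2 i hi |>.1) (hs.2 j hj |>.1)
      exact ⟨y, ⟨hyi, hya⟩, hyj, hya⟩
    rcases s.eq_empty_or_nonempty with rfl | ⟨i, hi⟩
    · obtain ⟨y, hy, -⟩ := hs.1.1
      exact ⟨y, hy, by simp⟩
    · exact ⟨x, (hx i hi).2, fun j hj ↦ (hx j hj).1⟩

section Action

variable {Γ : Type*} [Group Γ] [MulAction Γ V] {T : SimpleGraph V}
  {hact : ∀ (g : Γ) (u v : V), T.Adj u v → T.Adj (g • u) (g • v)}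

def smulWalk (hact : ∀ (g : Γ) (u v : V), T.Adj u v → T.Adj (g • u) (g • v)) (g : Γ)
    (p : T.Walk u v) : T.Walk (g • u) (g • v) :=
  p.map ⟨(g • ·), hact g _ _⟩

@[simp] lemma length_smulWalk (g : Γ) (p : T.Walk u v) :
    (smulWalk hact g p).length = p.length :=
  p.length_map _

@[simp] lemma getVert_smulWalk (g : Γ) (p : T.Walk u v) (i : ℕ) :
    (smulWalk hact g p).getVert i = g • p.getVert i :=
  p.getVert_map _ i

@[simp] lemma snd_smulWalk (g : Γ) (p : T.Walk u v) : (smulWalk hact g p).snd = g • p.snd :=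
  getVert_smulWalk g p 1

@[simp] lemma penultimate_smulWalk (g : Γ) (p : T.Walk u v) :
    (smulWalk hact g p).penultimate = g • p.penultimate := by
  simp [Walk.penultimate]

lemma Walk.IsPath.smulWalk {p : T.Walk u v} (hp : p.IsPath) (g : Γ) :
    (smulWalk hact g p).IsPath :=
  hp.map (MulAction.injective g)

/-- Otherwise `s` followed by its translates `g • s, …, g ^ (m - 1) • s` would be a path from `p`
to `g ^ m • p = p` of positive length. -/
lemma IsAcyclic.penultimate_eq_smul_snd (hT : T.IsAcyclic)
    (hact : ∀ (g : Γ) (u v : V), T.Adj u v → T.Adj (g • u) (g • v)) {g : Γ} {m : ℕ}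
    (hm : 0 < m) (hgm : g ^ m = 1) {p : V} {s : T.Walk p (g • p)} (hs : s.IsPath) :
    s.penultimate = g • s.snd := by
  by_contra hjunction
  have hsn : ¬s.Nil := fun hnil ↦ hjunction <| by
    have hlen := Walk.length_eq_zero_iff.mpr hnil
    simp only [Walk.penultimate, Walk.snd, hlen, zero_tsub, Walk.getVert_zero,
      s.getVert_of_length_le (hlen ▸ zero_le_one)]
    rw [← hnil.eq, ← hnil.eq]
  have hiter : ∀ k : ℕ, ∃ W : T.Walk p (g ^ k • p),
      W.IsPath ∧ W.length = k * s.length ∧ (W.Nil ∨ W.snd = s.snd) := by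
    intro k
    induction k with
    | zero => exact ⟨Walk.nil.copy rfl (by simp), by simp, by simp, by simp⟩
    | succ k ih =>
      obtain ⟨W, hW, hWlen, hWsnd⟩ := ih
      refine ⟨s.append ((smulWalk hact g W).copy rfl (by rw [smul_smul, ← pow_succ'])),
        hT.isPath_append hs ((Walk.isPath_copy _ _ _).mpr (hW.smulWalk g)) fun _ hgWn ↦ ?_, ?_,
        Or.inr (Walk.snd_append_of_not_nil _ hsn)⟩
      · have hWn : ¬W.Nil := by simpa [Walk.not_nil_iff_lt_length] using hgWn
        simpa [Walk.snd, hWsnd.resolve_left hWn] using hjunction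
      · simp [hWlen, add_mul, add_comm]
  obtain ⟨W, hW, hWlen, -⟩ := hiter m
  have hloop := (W.isPath_copy rfl (by rw [hgm, one_smul])).mpr hW
  have hWnil : W.Nil := (Walk.nil_copy _ _).mp (Walk.isPath_iff_nil.mp hloop)
  rw [← Walk.length_eq_zero_iff, hWlen, mul_eq_zero] at hWnil
  exact hsn (Walk.length_eq_zero_iff.mp (hWnil.resolve_left hm.ne'))

lemma IsAcyclic.isPathConvex_fixedBy (hT : T.IsAcyclic)
    (hact : ∀ (g : Γ) (u v : V), T.Adj u v → T.Adj (g • u) (g • v)) (g : Γ) :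
    T.IsPathConvex (fixedBy V g) := by
  intro x y (hx : g • x = x) (hy : g • y = y) p hp z hz
  have hgp : (smulWalk hact g p).copy hx hy = p :=
    congrArg Subtype.val <| (hT.subsingleton_path x y).elim
      ⟨_, (Walk.isPath_copy _ _ _).mpr (hp.smulWalk g)⟩ ⟨p, hp⟩
  obtain ⟨i, rfl, -⟩ := Walk.mem_support_iff_exists_getVert.mp hz
  have := congrArg (·.getVert i) hgp
  rwa [Walk.getVert_copy, getVert_smulWalk] at this

/-- A vertex of minimal displacement is fixed: otherwise the path to its image backtracks, which
for displacement one is an edge inversion and for larger displacement yields a vertex moved less. -/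
lemma IsTree.nonempty_fixedBy_of_pow_eq_one (hT : T.IsTree)
    (hact : ∀ (g : Γ) (u v : V), T.Adj u v → T.Adj (g • u) (g • v)) {g : Γ}
    (hg : ¬∃ u v : V, T.Adj u v ∧ g • u = v ∧ g • v = u) {m : ℕ} (hm : 0 < m)
    (hgm : g ^ m = 1) : (fixedBy V g).Nonempty := by
  have := hT.connected.nonempty
  obtain ⟨v, hmin⟩ : ∃ v : V, ∀ w : V, T.dist v (g • v) ≤ T.dist w (g • w) :=
    ⟨_, fun w ↦ Function.argmin_le (fun w ↦ T.dist w (g • w)) w⟩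
  refine ⟨v, ?_⟩
  by_contra hne
  obtain ⟨s, hs, hslen⟩ := hT.connected.exists_path_of_dist v (g • v)
  have hjunction := hT.isAcyclic.penultimate_eq_smul_snd hact hm hgm hs
  have hpos : 0 < s.length := hslen ▸ hT.connected.pos_dist_of_ne (Ne.symm hne)
  rcases Nat.lt_or_ge s.length 2 with hlen | hlen
  · have hsnd : s.snd = g • v := s.getVert_of_length_le (by omega)
    have hpen : s.penultimate = v := by simp [Walk.penultimate, show s.length - 1 = 0 by omega]
    refine hg ⟨v, g • v, ?_, rfl, ?_⟩
    · simpa [hsnd] using s.adj_snd (Walk.not_nil_iff_lt_length.mpr hpos)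
    · rw [← hsnd, ← hjunction, hpen]
  · have hcloser := s.dist_snd_penultimate_le hlen
    rw [hjunction] at hcloser
    have := hmin s.snd
    omega

/-- Join `p ∈ Fix g` to `q ∈ Fix h` at minimal distance by a path `w`. If `p ≠ q`, the path
`g • w` followed by `(g * h) • w⁻¹` runs from `p` to `(g * h) • p` and backtracks neither at its
middle nor where it meets its `g * h`-translate, contradicting that `g * h` has finite order. -/
lemma IsTree.nonempty_fixedBy_inter_of_pow_eq_one (hT : T.IsTree)
    (hact : ∀ (g : Γ) (u v : V), T.Adj u v → T.Adj (g • u) (g • v)) {g h : Γ}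
    (hg : (fixedBy V g).Nonempty) (hh : (fixedBy V h).Nonempty) {m : ℕ} (hm : 0 < m)
    (hgh : (g * h) ^ m = 1) : (fixedBy V g ∩ fixedBy V h).Nonempty := by
  obtain ⟨⟨p, q⟩, ⟨hp, hq⟩, hmin⟩ := exists_minimalFor_of_wellFoundedLT
    (fun x : V × V ↦ x.1 ∈ fixedBy V g ∧ x.2 ∈ fixedBy V h) (fun x ↦ T.dist x.1 x.2)
    (let ⟨x, hx⟩ := hg; let ⟨y, hy⟩ := hh; ⟨(x, y), hx, hy⟩)
  have hp : g • p = p := hp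
  have hq : h • q = q := hq
  have hcloser : ∀ x y, g • x = x → h • y = y → ¬T.dist x y < T.dist p q :=
    fun x y hx hy hlt ↦ hlt.not_ge (hmin (j := (x, y)) ⟨hx, hy⟩ hlt.le)
  by_cases hpq : p = q
  · exact ⟨p, hp, hpq ▸ hq⟩
  exfalso
  obtain ⟨w, hw, hwlen⟩ := hT.connected.exists_path_of_dist p q
  have hwpos : 0 < w.length := hwlen ▸ hT.connected.pos_dist_of_ne hpq
  have hwn : ¬w.Nil := Walk.not_nil_iff_lt_length.mpr hwpos
  set P : T.Walk p (g • q) := (smulWalk hact g w).copy hp rfl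
  set Q : T.Walk (g • q) ((g * h) • p) :=
    (smulWalk hact (g * h) w.reverse).copy (by rw [mul_smul, hq]) rfl
  have hPn : ¬P.Nil := by simpa [P, Walk.not_nil_iff_lt_length] using hwpos
  have hQn : ¬Q.Nil := by simpa [Q, Walk.not_nil_iff_lt_length] using hwpos
  have hs : (P.append Q).IsPath := by
    refine hT.isAcyclic.isPath_append ((Walk.isPath_copy _ _ _).mpr (hw.smulWalk g))
      ((Walk.isPath_copy _ _ _).mpr (hw.reverse.smulWalk _)) fun _ _ hmiddle ↦ ?_
    simp only [P, Q, Walk.penultimate_copy, Walk.snd_copy, penultimate_smulWalk, snd_smulWalk,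
      Walk.snd_reverse, mul_smul, smul_left_cancel_iff] at hmiddle
    refine hcloser p _ hp hmiddle.symm ?_
    have := dist_le w.dropLast
    grind [Walk.length_dropLast]
  have hjunction := hT.isAcyclic.penultimate_eq_smul_snd hact hm hgh hs
  rw [Walk.penultimate_append_of_not_nil _ hQn, Walk.snd_append_of_not_nil _ hPn] at hjunction
  simp only [P, Q, Walk.penultimate_copy, Walk.snd_copy, penultimate_smulWalk, snd_smulWalk,
    Walk.penultimate_reverse, smul_left_cancel_iff] at hjunction
  refine hcloser _ q hjunction.symm hq ?_
  have := dist_le w.tail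
  grind [Walk.length_tail]

end Action

end SimpleGraph

theorem coxeter_like_group_has_fixed_vertex_general
    {V : Type*} {Γ : Type*} [Group Γ] [MulAction Γ V]
    (T : SimpleGraph V) (hT : T.IsTree)
    (hact : ∀ (h : Γ) (u v : V), T.Adj u v → T.Adj (h • u) (h • v))
    (hnoinv : ∀ (h : Γ), ¬ ∃ u v : V, T.Adj u v ∧ h • u = v ∧ h • v = u)
    (n : ℕ) (a : Fin n → Γ)
    (α : Fin n → ℕ) (hα : ∀ i, 2 ≤ α i)
    (β : Fin n → Fin n → ℕ) (hβ : ∀ i j : Fin n, i < j → 2 ≤ β i j)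
    (hrel₁ : ∀ i, a i ^ α i = 1)
    (hrel₂ : ∀ i j : Fin n, i < j → (a i * a j) ^ β i j = 1) :
    ∃ p : V, ∀ h ∈ Subgroup.closure (Set.range a), h • p = p := by
  have hfix (i : Fin n) : (fixedBy V (a i)).Nonempty :=
    hT.nonempty_fixedBy_of_pow_eq_one hact (hnoinv (a i)) (two_pos.trans_le (hα i)) (hrel₁ i)
  have hfix₂ {i j : Fin n} (hij : i < j) : (fixedBy V (a i) ∩ fixedBy V (a j)).Nonempty :=
    hT.nonempty_fixedBy_inter_of_pow_eq_one hact (hfix i) (hfix j)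
      (two_pos.trans_le (hβ i j hij)) (hrel₂ i j hij)
  have hpair (i j : Fin n) : (fixedBy V (a i) ∩ fixedBy V (a j)).Nonempty := by
    rcases lt_trichotomy i j with hij | rfl | hji
    · exact hfix₂ hij
    · simpa using hfix i
    · simpa only [Set.inter_comm] using hfix₂ hji
  obtain ⟨p, hp⟩ := hT.exists_forall_mem_of_isPathConvex _
    (fun i ↦ hT.isAcyclic.isPathConvex_fixedBy hact (a i)) Finset.univ fun i _ j _ ↦ hpair i j
  have hclosure : Subgroup.closure (Set.range a) ≤ stabilizer Γ p :=
    (Subgroup.closure_le _).mpr <| Set.range_subset_iff.mpr fun i ↦ hp i (Finset.mem_univ i)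
  exact ⟨p, fun h hh ↦ hclosure hh⟩

/-- Let a group `Γ` act on a tree `T` by graph automorphisms
without edge inversions. If `a₁, …, aₙ ∈ Γ` (with `n ≥ 1`) satisfy relations
`aᵢ^{αᵢ} = 1` (`αᵢ ≥ 2`) and `(aᵢ aⱼ)^{β i j} = 1` (`β i j ≥ 2`, `i < j`),
then the subgroup generated by `a₁, …, aₙ` fixes some vertex of `T`. -/
theorem coxeter_like_group_has_fixed_vertex
    {V : Type*} {Γ : Type*} [Group Γ] [MulAction Γ V]
    (T : SimpleGraph V) (hT : T.IsTree)
    (hact : ∀ (h : Γ) (u v : V), T.Adj u v → T.Adj (h • u) (h • v))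
    (hnoinv : ∀ (h : Γ), ¬ ∃ u v : V, T.Adj u v ∧ h • u = v ∧ h • v = u)
    (n : ℕ) (hn : 1 ≤ n) (a : Fin n → Γ)
    (α : Fin n → ℕ) (hα : ∀ i, 2 ≤ α i)
    (β : Fin n → Fin n → ℕ) (hβ : ∀ i j : Fin n, i < j → 2 ≤ β i j)
    (hrel₁ : ∀ i, a i ^ α i = 1)
    (hrel₂ : ∀ i j : Fin n, i < j → (a i * a j) ^ β i j = 1) :
    ∃ p : V, ∀ h ∈ Subgroup.closure (Set.range a), h • p = p :=
  coxeter_like_group_has_fixed_vertex_general T hT hact hnoinv n a α hα β hβ hrel₁ hrel₂
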